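/- Let L ⊂ ℝ^n be a full-rank lattice and L* its dual lattice. Then L is simple cyclic if and only if L* is simple cyclic; that is, there exists c with L = span_ℤ{c, ρ(c), …, ρ^{n−1}(c)} if and only if there exists c' with L* = span_ℤ{c', ρ(c'), …, ρ^{n−1}(c')}. -/

import Mathlib

noncomputable section

/-- A full-rank lattice in `ℝⁿ`: the `ℤ`-span of an `ℝ`-basis of `ℝⁿ`. -/
def IsFullLattice (n : ℕ) (L : Submodule ℤ (EuclideanSpace ℝ (Fin n))) : Prop :=
  ∃ b : Module.Basis (Fin n) ℝ (EuclideanSpace ℝ (Fin n)), L = Submodule.span ℤ (Set.range b)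

/-- The rotation shift operator `ρ(c₁, …, c_n) = (c_n, c₁, …, c_{n-1})`. -/
def rotShift (n : ℕ) (c : EuclideanSpace ℝ (Fin n)) : EuclideanSpace ℝ (Fin n) :=
  WithLp.toLp 2 (fun i => c ((finRotate n).symm i))

/-- The dual lattice `L* = {x : ⟨x, y⟩ ∈ ℤ for all y ∈ L}`. -/
def dualLattice (n : ℕ) (L : Submodule ℤ (EuclideanSpace ℝ (Fin n))) :
    Set (EuclideanSpace ℝ (Fin n)) :=
  {x | ∀ y ∈ L, ∃ k : ℤ, (inner ℝ x y : ℝ) = (k : ℝ)}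

namespace SCAux

variable {n : ℕ}
open Fin.NatCast

lemma finRotate_symm_apply [NeZero n] (i : Fin n) : (finRotate n).symm i = i - 1 := by
  rw [Equiv.symm_apply_eq]
  cases n with
  | zero => exact i.elim0
  | succ m => rw [finRotate_succ_apply]; exact (sub_add_cancel i 1).symm

lemma rotShift_iterate [NeZero n] (k : ℕ) (x : EuclideanSpace ℝ (Fin n)) (i : Fin n) :
    (rotShift n)^[k] x i = x (i - (k : Fin n)) := by
  induction k generalizing x i with
  | zero =>
    simp only [Function.iterate_zero, id_eq]
    simp
  | succ m ih =>
    rw [Function.iterate_succ_apply, ih]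
    show x ((finRotate n).symm (i - (m : Fin n))) = _
    rw [finRotate_symm_apply, sub_sub]
    rw [Nat.cast_succ]

lemma rotShift_iterate_self [NeZero n] (x : EuclideanSpace ℝ (Fin n)) :
    (rotShift n)^[n] x = x := by
  ext i
  rw [rotShift_iterate, Fin.natCast_self, sub_zero]

lemma inner_rotShift (x y : EuclideanSpace ℝ (Fin n)) :
    (inner ℝ (rotShift n x) (rotShift n y) : ℝ) = inner ℝ x y := by
  simp only [PiLp.inner_apply, RCLike.inner_apply, starRingEnd_apply, star_trivial, rotShift]
  exact Equiv.sum_comp (finRotate n).symm (fun i => y i * x i)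

lemma inner_rotShift_iter (a : ℕ) (x y : EuclideanSpace ℝ (Fin n)) :
    (inner ℝ ((rotShift n)^[a] x) ((rotShift n)^[a] y) : ℝ) = inner ℝ x y := by
  induction a generalizing x y with
  | zero => simp
  | succ m ih => rw [Function.iterate_succ_apply, Function.iterate_succ_apply, ih, inner_rotShift]

/-- Representation of any vector in terms of a biorthogonal family. -/
lemma repr_eq (v w : Fin n → EuclideanSpace ℝ (Fin n))
    (hv : Submodule.span ℝ (Set.range v) = ⊤)
    (hvw : ∀ j k, (inner ℝ (w j) (v k) : ℝ) = if j = k then 1 else 0)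
    (x : EuclideanSpace ℝ (Fin n)) :
    x = ∑ k, (inner ℝ x (v k) : ℝ) • w k := by
  set z := x - ∑ k, (inner ℝ x (v k) : ℝ) • w k with hz
  have key : ∀ j, (inner ℝ z (v j) : ℝ) = 0 := by
    intro j
    rw [hz, inner_sub_left, sum_inner]
    simp only [real_inner_smul_left, hvw, mul_ite, mul_one, mul_zero]
    rw [Finset.sum_ite_eq' Finset.univ j (fun k => (inner ℝ x (v k) : ℝ))]
    simp
  have hzspan : ∀ u ∈ Submodule.span ℝ (Set.range v), (inner ℝ z u : ℝ) = 0 := by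
    intro u hu
    induction hu using Submodule.span_induction with
    | mem u hu => obtain ⟨j, rfl⟩ := hu; exact key j
    | zero => simp
    | add a b _ _ ha hb => rw [inner_add_right, ha, hb, add_zero]
    | smul r a _ ha => rw [real_inner_smul_right, ha, mul_zero]
  have : (inner ℝ z z : ℝ) = 0 := hzspan z (hv ▸ Submodule.mem_top)
  have hz0 : z = 0 := by rwa [inner_self_eq_zero] at this
  exact (sub_eq_zero.mp hz0)

/-- The span over ℝ of the dual family is everything. -/
lemma span_dual_top (v w : Fin n → EuclideanSpace ℝ (Fin n))
    (hv : Submodule.span ℝ (Set.range v) = ⊤)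
    (hvw : ∀ j k, (inner ℝ (w j) (v k) : ℝ) = if j = k then 1 else 0) :
    Submodule.span ℝ (Set.range w) = ⊤ := by
  rw [eq_top_iff]
  intro x _
  rw [repr_eq v w hv hvw x]
  exact Submodule.sum_mem _ fun k _ =>
    Submodule.smul_mem _ _ (Submodule.subset_span (Set.mem_range_self k))

/-- The dual lattice of the `ℤ`-span of a spanning family `v` is the `ℤ`-span of a
biorthogonal family `w`. -/
lemma dualLattice_span (v w : Fin n → EuclideanSpace ℝ (Fin n))
    (hv : Submodule.span ℝ (Set.range v) = ⊤)
    (hvw : ∀ j k, (inner ℝ (w j) (v k) : ℝ) = if j = k then 1 else 0) :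
    dualLattice n (Submodule.span ℤ (Set.range v)) =
      ↑(Submodule.span ℤ (Set.range w)) := by
  ext x
  constructor
  · intro hx
    choose m hm using fun k => hx (v k) (Submodule.subset_span (Set.mem_range_self k))
    have hx2 : x = ∑ k, (m k : ℤ) • w k := by
      have := repr_eq v w hv hvw x
      rw [this]
      refine Finset.sum_congr rfl fun k _ => ?_
      rw [hm k, Int.cast_smul_eq_zsmul]
    rw [SetLike.mem_coe, hx2]
    exact Submodule.sum_mem _ fun k _ =>
      Submodule.smul_mem _ _ (Submodule.subset_span (Set.mem_range_self k))
  · intro hx y hy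
    induction hx using Submodule.span_induction generalizing y with
    | mem u hu =>
      obtain ⟨j, rfl⟩ := hu
      induction hy using Submodule.span_induction with
      | mem a ha =>
        obtain ⟨k, rfl⟩ := ha
        refine ⟨if j = k then 1 else 0, ?_⟩
        rw [hvw]
        split <;> norm_num
      | zero => exact ⟨0, by simp⟩
      | add a b _ _ ha hb =>
        obtain ⟨p, hp⟩ := ha; obtain ⟨q, hq⟩ := hb
        exact ⟨p + q, by rw [inner_add_right, hp, hq]; push_cast; ring⟩
      | smul r a _ ha =>
        obtain ⟨p, hp⟩ := ha
        refine ⟨r * p, ?_⟩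
        rw [← Int.cast_smul_eq_zsmul ℝ r a, real_inner_smul_right, hp]
        push_cast; ring
    | zero => exact ⟨0, by simp⟩
    | add a b _ _ ha hb =>
      obtain ⟨p, hp⟩ := ha y hy; obtain ⟨q, hq⟩ := hb y hy
      exact ⟨p + q, by rw [inner_add_left, hp, hq]; push_cast; ring⟩
    | smul r a _ ha =>
      obtain ⟨p, hp⟩ := ha y hy
      refine ⟨r * p, ?_⟩
      rw [← Int.cast_smul_eq_zsmul ℝ r a, real_inner_smul_left, hp]
      push_cast; ring

/-- Every basis has a biorthogonal (dual) family. -/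
lemma exists_dual_basis (b : Module.Basis (Fin n) ℝ (EuclideanSpace ℝ (Fin n))) :
    ∃ w : Fin n → EuclideanSpace ℝ (Fin n),
      ∀ j k, (inner ℝ (w j) (b k) : ℝ) = if j = k then 1 else 0 := by
  refine ⟨fun j => (InnerProductSpace.toDual ℝ _).symm
    (LinearMap.toContinuousLinearMap (b.coord j)), fun j k => ?_⟩
  rw [InnerProductSpace.toDual_symm_apply]
  simp [Module.Basis.coord_apply, Module.Basis.repr_self, Finsupp.single_apply, eq_comm]

/-- Biorthogonality for the rotated dual family. -/
lemma cyclic_biorthogonal (c w0 : EuclideanSpace ℝ (Fin n))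
    (h : ∀ r : ℕ, r < n → (inner ℝ w0 ((rotShift n)^[r] c) : ℝ) = if r = 0 then 1 else 0) :
    ∀ j k : Fin n, (inner ℝ ((rotShift n)^[(j : ℕ)] w0) ((rotShift n)^[(k : ℕ)] c) : ℝ)
      = if j = k then 1 else 0 := by
  intro j k
  haveI : NeZero n := ⟨j.pos.ne'⟩
  rcases le_or_gt (j : ℕ) (k : ℕ) with hjk | hjk
  · obtain ⟨d, hd⟩ : ∃ d, (k : ℕ) = (j : ℕ) + d := ⟨(k : ℕ) - j, by omega⟩
    have hiter : (rotShift n)^[(k : ℕ)] c = (rotShift n)^[(j : ℕ)] ((rotShift n)^[d] c) := by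
      rw [hd, Function.iterate_add_apply]
    rw [hiter, inner_rotShift_iter, h d (by omega)]
    have : d = 0 ↔ j = k := by rw [Fin.ext_iff]; omega
    simp [this]
  · obtain ⟨d, hd0, hd⟩ : ∃ d, 0 < d ∧ (j : ℕ) = (k : ℕ) + d := ⟨(j : ℕ) - k, by omega, by omega⟩
    have hiter : (rotShift n)^[(j : ℕ)] w0 = (rotShift n)^[(k : ℕ)] ((rotShift n)^[d] w0) := by
      rw [hd, Function.iterate_add_apply]
    rw [hiter, inner_rotShift_iter]
    have hc : c = (rotShift n)^[d] ((rotShift n)^[n - d] c) := by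
      rw [← Function.iterate_add_apply]
      have : d + (n - d) = n := by omega
      rw [this, rotShift_iterate_self]
    rw [hc, inner_rotShift_iter, h (n - d) (by omega)]
    have h1 : ¬ (n - d = 0) := by omega
    have h2 : ¬ (j = k) := by rw [Fin.ext_iff]; omega
    simp [h1, h2]

/-- If the rotated family generated by `c` spans `ℝⁿ`, then the dual lattice of its
`ℤ`-span is again simple cyclic. -/
lemma cyclic_dual_main' [NeZero n] (c : EuclideanSpace ℝ (Fin n))
    (hv : Submodule.span ℝ (Set.range fun k : Fin n => (rotShift n)^[k] c) = ⊤) :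
    ∃ c' : EuclideanSpace ℝ (Fin n),
      dualLattice n (Submodule.span ℤ (Set.range fun k : Fin n => (rotShift n)^[k] c)) =
        ↑(Submodule.span ℤ (Set.range fun k : Fin n => (rotShift n)^[k] c')) := by
  have hcard : Fintype.card (Fin n) = Module.finrank ℝ (EuclideanSpace ℝ (Fin n)) := by
    simp [finrank_euclideanSpace_fin]
  let bv : Module.Basis (Fin n) ℝ (EuclideanSpace ℝ (Fin n)) :=
    basisOfTopLeSpanOfCardEqFinrank _ hv.ge hcard
  have hbv : ⇑bv = fun k : Fin n => (rotShift n)^[k] c :=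
    coe_basisOfTopLeSpanOfCardEqFinrank _ hv.ge hcard
  obtain ⟨w, hw⟩ := exists_dual_basis bv
  rw [hbv] at hw
  have h0 : ∀ r : ℕ, r < n →
      (inner ℝ (w 0) ((rotShift n)^[r] c) : ℝ) = if r = 0 then 1 else 0 := by
    intro r hr
    have := hw 0 ⟨r, hr⟩
    simpa [Fin.ext_iff, eq_comm] using this
  have hbi := cyclic_biorthogonal c (w 0) h0
  exact ⟨w 0, dualLattice_span _ _ hv hbi⟩

/-- If the rotated family generated by `c` spans `ℝⁿ`, then the dual lattice of its
`ℤ`-span is again simple cyclic. -/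
lemma cyclic_dual_main (c : EuclideanSpace ℝ (Fin n))
    (hv : Submodule.span ℝ (Set.range fun k : Fin n => (rotShift n)^[k] c) = ⊤) :
    ∃ c' : EuclideanSpace ℝ (Fin n),
      dualLattice n (Submodule.span ℤ (Set.range fun k : Fin n => (rotShift n)^[k] c)) =
        ↑(Submodule.span ℤ (Set.range fun k : Fin n => (rotShift n)^[k] c')) := by
  cases n with
  | zero =>
    refine ⟨c, ?_⟩
    ext x
    have hx0 : x = 0 := PiLp.ext fun i => i.elim0
    constructor
    · intro _
      rw [SetLike.mem_coe, hx0]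
      exact Submodule.zero_mem _
    · intro _ y _
      exact ⟨0, by simp [PiLp.inner_apply]⟩
  | succ m => exact cyclic_dual_main' c hv

end SCAux

open SCAux

/-- A full-rank lattice is simple cyclic if and only if its dual lattice is
simple cyclic. -/
theorem simpleCyclic_iff_dual_simpleCyclic (n : ℕ)
    (L : Submodule ℤ (EuclideanSpace ℝ (Fin n))) (hL : IsFullLattice n L) :
    (∃ c : EuclideanSpace ℝ (Fin n),
        L = Submodule.span ℤ (Set.range fun k : Fin n => (rotShift n)^[k] c)) ↔
      (∃ c' : EuclideanSpace ℝ (Fin n),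
        dualLattice n L =
          (Submodule.span ℤ (Set.range fun k : Fin n => (rotShift n)^[k] c') :
            Set (EuclideanSpace ℝ (Fin n)))) := by
  obtain ⟨b, hb⟩ := hL
  have hbtop : Submodule.span ℝ (Set.range ⇑b) = ⊤ := b.span_eq
  constructor
  · rintro ⟨c, hc⟩
    have hv : Submodule.span ℝ (Set.range fun k : Fin n => (rotShift n)^[k] c) = ⊤ := by
      have h1 : Submodule.span ℝ
          ((Submodule.span ℤ (Set.range ⇑b) : Submodule ℤ (EuclideanSpace ℝ (Fin n))) :
            Set (EuclideanSpace ℝ (Fin n))) = ⊤ := by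
        rw [Submodule.span_span_of_tower]; exact hbtop
      rw [← hb, hc, Submodule.span_span_of_tower] at h1
      exact h1
    obtain ⟨c', hc'⟩ := cyclic_dual_main c hv
    exact ⟨c', by rw [hc]; exact hc'⟩
  · rintro ⟨c', hc'⟩
    obtain ⟨wb, hwb⟩ := exists_dual_basis b
    have hDL : dualLattice n L = ↑(Submodule.span ℤ (Set.range wb)) := by
      rw [hb]; exact dualLattice_span (⇑b) wb hbtop hwb
    have heq : Submodule.span ℤ (Set.range fun k : Fin n => (rotShift n)^[k] c')
        = Submodule.span ℤ (Set.range wb) := by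
      apply SetLike.coe_injective
      rw [← hc', hDL]
    have hwspan : Submodule.span ℝ (Set.range wb) = ⊤ := span_dual_top (⇑b) wb hbtop hwb
    have hv' : Submodule.span ℝ (Set.range fun k : Fin n => (rotShift n)^[k] c') = ⊤ := by
      have h1 : Submodule.span ℝ
          ((Submodule.span ℤ (Set.range fun k : Fin n => (rotShift n)^[k] c') :
            Submodule ℤ (EuclideanSpace ℝ (Fin n))) : Set (EuclideanSpace ℝ (Fin n))) = ⊤ := by
        rw [heq, Submodule.span_span_of_tower, hwspan]
      rwa [Submodule.span_span_of_tower] at h1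
    obtain ⟨c'', hc''⟩ := cyclic_dual_main c' hv'
    have hbw : ∀ j k, (inner ℝ (b j) (wb k) : ℝ) = if j = k then 1 else 0 := by
      intro j k
      rw [real_inner_comm, hwb]
      simp [eq_comm]
    have hback : dualLattice n (Submodule.span ℤ (Set.range wb))
        = ↑(Submodule.span ℤ (Set.range ⇑b)) :=
      dualLattice_span wb (⇑b) hwspan hbw
    refine ⟨c'', ?_⟩
    apply SetLike.coe_injective
    rw [hb, ← hback, ← heq, hc'']

end
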